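/- Let (π : A → B, ⊞, 0) be as in the context. Then for all x, x' ∈ F(A) and b ∈ B (elements of B acting on A through 0): x·(x'·b) = (x·x')·b, (b·x)·x' = b·(x·x'), and (x·b)·x' = x·(b·x'). -/

import Mathlib

open TensorProduct

namespace FormalLoops

variable (k : Type*) [Field k]

/-- A unital, not necessarily associative, bialgebra with left and right divisions:
a cocommutative coassociative counital coalgebra together with a bilinear unital
multiplication and bilinear left/right divisions which are coalgebra morphisms and
satisfy the division cancellation laws (in Sweedler form). -/
structure DivBialg (A : Type*) [AddCommGroup A] [Module k A] where
  Δ : A →ₗ[k] A ⊗[k] A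
  ε : A →ₗ[k] k
  mul : A →ₗ[k] A →ₗ[k] A
  one : A
  ld : A →ₗ[k] A →ₗ[k] A
  rd : A →ₗ[k] A →ₗ[k] A
  coassoc : ∀ u : A, (TensorProduct.assoc k A A A) ((Δ.rTensor A) (Δ u)) = (Δ.lTensor A) (Δ u)
  counit_left : ∀ u : A, (TensorProduct.lid k A) ((ε.rTensor A) (Δ u)) = u
  counit_right : ∀ u : A, (TensorProduct.rid k A) ((ε.lTensor A) (Δ u)) = u
  cocomm : ∀ u : A, (TensorProduct.comm k A A) (Δ u) = Δ u
  Δ_one : Δ one = one ⊗ₜ[k] one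
  ε_one : ε one = 1
  one_mul : ∀ u, mul one u = u
  mul_one : ∀ u, mul u one = u
  Δ_mul : ∀ u v, Δ (mul u v) = TensorProduct.map₂ mul mul (Δ u) (Δ v)
  ε_mul : ∀ u v, ε (mul u v) = ε u * ε v
  Δ_ld : ∀ u v, Δ (ld u v) = TensorProduct.map₂ ld ld (Δ u) (Δ v)
  ε_ld : ∀ u v, ε (ld u v) = ε u * ε v
  Δ_rd : ∀ u v, Δ (rd u v) = TensorProduct.map₂ rd rd (Δ u) (Δ v)
  ε_rd : ∀ u v, ε (rd u v) = ε u * ε v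
  /-- Σ u₍₁₎\(u₍₂₎v) = ε(u)v -/
  ld_mul_cancel : ∀ u v, TensorProduct.lift ld ((LinearMap.lTensor A (mul.flip v)) (Δ u)) = ε u • v
  /-- Σ u₍₁₎(u₍₂₎\v) = ε(u)v -/
  mul_ld_cancel : ∀ u v, TensorProduct.lift mul ((LinearMap.lTensor A (ld.flip v)) (Δ u)) = ε u • v
  /-- Σ (vu₍₁₎)/u₍₂₎ = ε(u)v -/
  rd_mul_cancel : ∀ u v, TensorProduct.lift rd ((LinearMap.rTensor A (mul v)) (Δ u)) = ε u • v
  /-- Σ (v/u₍₁₎)u₍₂₎ = ε(u)v -/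
  mul_rd_cancel : ∀ u v, TensorProduct.lift mul ((LinearMap.rTensor A (rd v)) (Δ u)) = ε u • v

variable {A B : Type*} [AddCommGroup A] [Module k A] [AddCommGroup B] [Module k B]

/-- A morphism of unital bialgebras with divisions. -/
structure DivBialgHom (SA : DivBialg k A) (SB : DivBialg k B) (π : A →ₗ[k] B) : Prop where
  map_Δ : ∀ u, TensorProduct.map π π (SA.Δ u) = SB.Δ (π u)
  map_ε : ∀ u, SB.ε (π u) = SA.ε u
  map_mul : ∀ u v, π (SA.mul u v) = SB.mul (π u) (π v)
  map_one : π SA.one = SB.one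
  map_ld : ∀ u v, π (SA.ld u v) = SB.ld (π u) (π v)
  map_rd : ∀ u v, π (SA.rd u v) = SB.rd (π u) (π v)

/-- `D` is a subcoalgebra w.r.t. the comultiplication `Δ`: `Δ(D) ⊆ D ⊗ D`. -/
def IsSubcoalg {M : Type*} [AddCommGroup M] [Module k M] (Δ : M →ₗ[k] M ⊗[k] M)
    (D : Submodule k M) : Prop :=
  ∀ x ∈ D, Δ x ∈ LinearMap.range (TensorProduct.map D.subtype D.subtype)

/-- `F(A)`: the sum of all subcoalgebras `D ⊆ A` on which `π = ε(·) • 1`. -/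
def Fsub (SA : DivBialg k A) (oneB : B) (π : A →ₗ[k] B) : Submodule k A :=
  sSup {D : Submodule k A | IsSubcoalg k SA.Δ D ∧ ∀ x ∈ D, π x = SA.ε x • oneB}

end FormalLoops

namespace FormalLoops

variable (k : Type*) [Field k]
variable {A B : Type*} [AddCommGroup A] [Module k A] [AddCommGroup B] [Module k B]

/-- The comultiplication of the tensor-product coalgebra `A ⊗ A`. -/
noncomputable def tcomul (SA : DivBialg k A) :
    A ⊗[k] A →ₗ[k] (A ⊗[k] A) ⊗[k] (A ⊗[k] A) :=
  (TensorProduct.tensorTensorTensorComm k A A A A).toLinearMap ∘ₗ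
    TensorProduct.map SA.Δ SA.Δ

/-- The counit of the tensor-product coalgebra `A ⊗ A`. -/
noncomputable def tcounit (SA : DivBialg k A) : A ⊗[k] A →ₗ[k] k :=
  (TensorProduct.lid k k).toLinearMap ∘ₗ TensorProduct.map SA.ε SA.ε

/-- The linear map `A ⊗ A → B`, `u ⊗ v ↦ ε(v) π(u)`. -/
noncomputable def pbFst (SA : DivBialg k A) (π : A →ₗ[k] B) : A ⊗[k] A →ₗ[k] B :=
  (TensorProduct.rid k B).toLinearMap ∘ₗ TensorProduct.map π SA.ε

/-- The linear map `A ⊗ A → B`, `u ⊗ v ↦ ε(u) π(v)`. -/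
noncomputable def pbSnd (SA : DivBialg k A) (π : A →ₗ[k] B) : A ⊗[k] A →ₗ[k] B :=
  (TensorProduct.lid k B).toLinearMap ∘ₗ TensorProduct.map SA.ε π

/-- The pullback `A ⊗_B A`: the sum of all subcoalgebras of the tensor-product
coalgebra `A ⊗ A` on which `u ⊗ v ↦ ε(v)π(u)` and `u ⊗ v ↦ ε(u)π(v)` agree. -/
noncomputable def pbSub (SA : DivBialg k A) (π : A →ₗ[k] B) : Submodule k (A ⊗[k] A) :=
  sSup {C : Submodule k (A ⊗[k] A) | IsSubcoalg k (tcomul k SA) C ∧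
    ∀ t ∈ C, pbFst k SA π t = pbSnd k SA π t}

/-- The data of an abelian group `(π : A → B, ⊞, 0)` in the comma category over `B`:
a linear map `⊞ = bp : A ⊗_B A → A` which lies over `B`, is a coalgebra morphism
(witnessed by a corestriction `Δpb` of the comultiplication of `A ⊗ A` to `A ⊗_B A`),
is multiplicative, commutative, associative on `F(A)` and has `0 = z ∘ π` as unit. -/
structure BoxPlusData (SA : DivBialg k A) (SB : DivBialg k B)
    (π : A →ₗ[k] B) (z : B →ₗ[k] A) where
  bp : ↥(pbSub k SA π) →ₗ[k] A
  Δpb : ↥(pbSub k SA π) →ₗ[k] (↥(pbSub k SA π) ⊗[k] ↥(pbSub k SA π))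
  Δpb_compat : ∀ t : pbSub k SA π,
    TensorProduct.map (pbSub k SA π).subtype (pbSub k SA π).subtype (Δpb t)
      = tcomul k SA (t : A ⊗[k] A)
  π_bp : ∀ t : pbSub k SA π, π (bp t) = pbFst k SA π (t : A ⊗[k] A)
  Δ_bp : ∀ t : pbSub k SA π, SA.Δ (bp t) = TensorProduct.map bp bp (Δpb t)
  ε_bp : ∀ t : pbSub k SA π, SA.ε (bp t) = tcounit k SA (t : A ⊗[k] A)
  bp_mul : ∀ (t t' : pbSub k SA π)
      (h : TensorProduct.map₂ SA.mul SA.mul (t : A ⊗[k] A) (t' : A ⊗[k] A) ∈ pbSub k SA π),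
      bp ⟨TensorProduct.map₂ SA.mul SA.mul (t : A ⊗[k] A) (t' : A ⊗[k] A), h⟩
        = SA.mul (bp t) (bp t')
  bp_flip : ∀ (t : pbSub k SA π)
      (h : (TensorProduct.comm k A A) (t : A ⊗[k] A) ∈ pbSub k SA π),
      bp ⟨(TensorProduct.comm k A A) (t : A ⊗[k] A), h⟩ = bp t
  bp_assoc : ∀ x ∈ Fsub k SA SB.one π, ∀ y ∈ Fsub k SA SB.one π, ∀ w ∈ Fsub k SA SB.one π,
      ∀ (h1 : x ⊗ₜ[k] y ∈ pbSub k SA π) (h2 : y ⊗ₜ[k] w ∈ pbSub k SA π)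
        (h3 : (bp ⟨x ⊗ₜ[k] y, h1⟩) ⊗ₜ[k] w ∈ pbSub k SA π)
        (h4 : x ⊗ₜ[k] (bp ⟨y ⊗ₜ[k] w, h2⟩) ∈ pbSub k SA π),
      bp ⟨(bp ⟨x ⊗ₜ[k] y, h1⟩) ⊗ₜ[k] w, h3⟩ = bp ⟨x ⊗ₜ[k] (bp ⟨y ⊗ₜ[k] w, h2⟩), h4⟩
  bp_unit_right : ∀ (u : A)
      (h : (LinearMap.lTensor A (z ∘ₗ π)) (SA.Δ u) ∈ pbSub k SA π),
      bp ⟨(LinearMap.lTensor A (z ∘ₗ π)) (SA.Δ u), h⟩ = u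
  bp_unit_left : ∀ (u : A)
      (h : (LinearMap.rTensor A (z ∘ₗ π)) (SA.Δ u) ∈ pbSub k SA π),
      bp ⟨(LinearMap.rTensor A (z ∘ₗ π)) (SA.Δ u), h⟩ = u

end FormalLoops

/-!
For `x ∈ F(A)` one has `Σ x₍₁₎ ⊗ 0(π x₍₂₎) = x ⊗ 1`, so by the unit law and commutativity
of `⊞` the tensors `x ⊗ 1` and `1 ⊗ x` lie in `A ⊗_B A` and are sent to `x`; likewise
`Σ 0(b)₍₁₎ ⊗ 0(π 0(b)₍₂₎)` is sent to `0(b)`. The pullback `A ⊗_B A` is closed under the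
componentwise product of `A ⊗ A` and `⊞` is multiplicative, so each side of the three
identities is `⊞` of a product of these tensors. The two products agree already in `A ⊗ A`,
because in each tensor factor one of the three elements multiplied is `1`.
-/

namespace FormalLoops

open Submodule (map₂_le apply_mem_map₂)

section Subcoalgebra

variable {k M N P : Type*} [Field k] [AddCommGroup M] [Module k M] [AddCommGroup N] [Module k N]
  [AddCommGroup P] [Module k P]

lemma isSubcoalg_iff {Δ : M →ₗ[k] M ⊗[k] M} {D : Submodule k M} :
    IsSubcoalg k Δ D ↔ ∀ x ∈ D, Δ x ∈ Submodule.map₂ (mk k M M) D D := by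
  simp only [IsSubcoalg, ← range_mapIncl]

lemma isSubcoalg_top (Δ : M →ₗ[k] M ⊗[k] M) : IsSubcoalg k Δ ⊤ :=
  isSubcoalg_iff.2 fun x _ => by simp [map₂_mk_top_top_eq_top]

lemma isSubcoalg_sSup {Δ : M →ₗ[k] M ⊗[k] M} {S : Set (Submodule k M)}
    (hS : ∀ D ∈ S, IsSubcoalg k Δ D) : IsSubcoalg k Δ (sSup S) := by
  have : sSup S ≤ (Submodule.map₂ (mk k M M) (sSup S) (sSup S)).comap Δ :=
    sSup_le fun D hD x hx => Submodule.map₂_le_map₂ (le_sSup hD) (le_sSup hD)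
      (isSubcoalg_iff.1 (hS D hD) x hx)
  exact isSubcoalg_iff.2 fun x hx => this hx

lemma IsSubcoalg.map {ΔM : M →ₗ[k] M ⊗[k] M} {ΔN : N →ₗ[k] N ⊗[k] N} {D : Submodule k M}
    (hD : IsSubcoalg k ΔM D) (f : M →ₗ[k] N) (hf : ∀ x, ΔN (f x) = TensorProduct.map f f (ΔM x)) :
    IsSubcoalg k ΔN (D.map f) := by
  have : Submodule.map₂ (mk k M M) D D
      ≤ (Submodule.map₂ (mk k N N) (D.map f) (D.map f)).comap (TensorProduct.map f f) :=
    map₂_le.2 fun a ha b hb =>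
      apply_mem_map₂ _ (Submodule.mem_map_of_mem ha) (Submodule.mem_map_of_mem hb)
  rw [isSubcoalg_iff]
  rintro _ ⟨x, hx, rfl⟩
  rw [hf]
  exact this (isSubcoalg_iff.1 hD x hx)

lemma IsSubcoalg.map₂ {ΔM : M →ₗ[k] M ⊗[k] M} {ΔN : N →ₗ[k] N ⊗[k] N} {ΔP : P →ₗ[k] P ⊗[k] P}
    {D : Submodule k M} {E : Submodule k N} (hD : IsSubcoalg k ΔM D) (hE : IsSubcoalg k ΔN E)
    (g : M →ₗ[k] N →ₗ[k] P) (hg : ∀ m n, ΔP (g m n) = TensorProduct.map₂ g g (ΔM m) (ΔN n)) :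
    IsSubcoalg k ΔP (Submodule.map₂ g D E) := by
  set G := Submodule.map₂ g D E
  have hGG : Submodule.map₂ (TensorProduct.map₂ g g) (Submodule.map₂ (mk k M M) D D)
      (Submodule.map₂ (mk k N N) E E) ≤ Submodule.map₂ (mk k P P) G G := by
    rw [Submodule.map₂_eq_span_image2 (mk k M M), Submodule.map₂_eq_span_image2 (mk k N N),
      Submodule.map₂_span_span, Submodule.span_le]
    rintro _ ⟨_, ⟨a, ha, a', ha', rfl⟩, _, ⟨b, hb, b', hb', rfl⟩, rfl⟩
    exact apply_mem_map₂ _ (apply_mem_map₂ _ ha hb) (apply_mem_map₂ _ ha' hb')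
  have : G ≤ (Submodule.map₂ (mk k P P) G G).comap ΔP :=
    map₂_le.2 fun m hm n hn => by
      rw [Submodule.mem_comap, hg]
      exact hGG (apply_mem_map₂ _ (isSubcoalg_iff.1 hD m hm) (isSubcoalg_iff.1 hE n hn))
  exact isSubcoalg_iff.2 fun x hx => this hx

end Subcoalgebra

section TensorCoalgebra

variable {k A B : Type*} [Field k] [AddCommGroup A] [Module k A] [AddCommGroup B] [Module k B]
  (SA : DivBialg k A)

abbrev DivBialg.toCoalgebra : Coalgebra k A where
  comul := SA.Δ
  counit := SA.ε
  coassoc := LinearMap.ext SA.coassoc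
  rTensor_counit_comp_comul := LinearMap.ext fun u =>
    (TensorProduct.lid k A).injective (by simpa using SA.counit_left u)
  lTensor_counit_comp_comul := LinearMap.ext fun u =>
    (TensorProduct.rid k A).injective (by simpa using SA.counit_right u)

lemma tcomul_comm (t : A ⊗[k] A) :
    tcomul k SA (TensorProduct.comm k A A t)
      = map (TensorProduct.comm k A A).toLinearMap (TensorProduct.comm k A A).toLinearMap
          (tcomul k SA t) := by
  have h : (tensorTensorTensorComm k A A A A).toLinearMap
        ∘ₗ (TensorProduct.comm k (A ⊗[k] A) (A ⊗[k] A)).toLinearMap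
      = map (TensorProduct.comm k A A).toLinearMap (TensorProduct.comm k A A).toLinearMap
        ∘ₗ (tensorTensorTensorComm k A A A A).toLinearMap := by
    ext; rfl
  simpa [tcomul, TensorProduct.map_comm] using LinearMap.congr_fun h (map SA.Δ SA.Δ t)

lemma tcomul_map₂_mul (s t : A ⊗[k] A) :
    tcomul k SA (map₂ SA.mul SA.mul s t)
      = map₂ (map₂ SA.mul SA.mul) (map₂ SA.mul SA.mul) (tcomul k SA s) (tcomul k SA t) := by
  have hΔ : (map₂ SA.mul SA.mul).compr₂ (map SA.Δ SA.Δ)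
      = (map₂ (map₂ SA.mul SA.mul) (map₂ SA.mul SA.mul)).compl₁₂
          (map SA.Δ SA.Δ) (map SA.Δ SA.Δ) := by
    ext a b c d
    simp [SA.Δ_mul]
  have hcomm : (map₂ (map₂ SA.mul SA.mul) (map₂ SA.mul SA.mul)).compr₂
        (tensorTensorTensorComm k A A A A).toLinearMap
      = (map₂ (map₂ SA.mul SA.mul) (map₂ SA.mul SA.mul)).compl₁₂
          (tensorTensorTensorComm k A A A A).toLinearMap
          (tensorTensorTensorComm k A A A A).toLinearMap := by
    ext; rfl
  have h1 := LinearMap.congr_fun₂ hΔ s t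
  have h2 := LinearMap.congr_fun₂ hcomm (map SA.Δ SA.Δ s) (map SA.Δ SA.Δ t)
  simp only [LinearMap.compr₂_apply, LinearMap.compl₁₂_apply] at h1 h2
  simp only [tcomul, LinearMap.comp_apply, LinearEquiv.coe_coe, h1, h2]

variable (π : A →ₗ[k] B)

lemma pbFst_comm (t : A ⊗[k] A) :
    pbFst k SA π (TensorProduct.comm k A A t) = pbSnd k SA π t := by
  induction t using TensorProduct.induction_on with
  | zero => simp
  | tmul a c => simp [pbFst, pbSnd]
  | add t₁ t₂ h₁ h₂ => simp only [map_add, h₁, h₂]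

lemma pbSnd_comm (t : A ⊗[k] A) :
    pbSnd k SA π (TensorProduct.comm k A A t) = pbFst k SA π t := by
  rw [← pbFst_comm, TensorProduct.comm_comm]

variable {SB : DivBialg k B} {SA π}

lemma pbFst_map₂_mul (hπ : DivBialgHom k SA SB π) (s t : A ⊗[k] A) :
    pbFst k SA π (map₂ SA.mul SA.mul s t) = SB.mul (pbFst k SA π s) (pbFst k SA π t) := by
  have h : (map₂ SA.mul SA.mul).compr₂ (pbFst k SA π)
      = SB.mul.compl₁₂ (pbFst k SA π) (pbFst k SA π) := by
    ext a b c d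
    simp [pbFst, SA.ε_mul, hπ.map_mul, smul_smul, mul_comm]
  exact LinearMap.congr_fun₂ h s t

lemma pbSnd_map₂_mul (hπ : DivBialgHom k SA SB π) (s t : A ⊗[k] A) :
    pbSnd k SA π (map₂ SA.mul SA.mul s t) = SB.mul (pbSnd k SA π s) (pbSnd k SA π t) := by
  have h : (map₂ SA.mul SA.mul).compr₂ (pbSnd k SA π)
      = SB.mul.compl₁₂ (pbSnd k SA π) (pbSnd k SA π) := by
    ext a b c d
    simp [pbSnd, SA.ε_mul, hπ.map_mul, smul_smul, mul_comm]
  exact LinearMap.congr_fun₂ h s t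

end TensorCoalgebra

section PairWithZero

variable {k A B : Type*} [Field k] [AddCommGroup A] [Module k A] [AddCommGroup B] [Module k B]
  {SA : DivBialg k A} {SB : DivBialg k B} {π : A →ₗ[k] B} {z : B →ₗ[k] A}

variable (SA π z) in
/-- The map `u ↦ (u, 0)` into `A ⊗_B A`. -/
noncomputable def pairWithZero : A →ₗ[k] A ⊗[k] A :=
  LinearMap.lTensor A (z ∘ₗ π) ∘ₗ SA.Δ

lemma tcomul_pairWithZero (hπ : DivBialgHom k SA SB π) (hz : DivBialgHom k SB SA z) (u : A) :
    tcomul k SA (pairWithZero SA π z u)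
      = map (pairWithZero SA π z) (pairWithZero SA π z) (SA.Δ u) := by
  -- `Δ : A → A ⊗ A` is a coalgebra map because `A` is cocommutative.
  let _ : Coalgebra k A := SA.toCoalgebra
  have : Coalgebra.IsCocomm k A := ⟨LinearMap.ext SA.cocomm⟩
  let zπ : A →ₗc[k] A :=
    { toLinearMap := z ∘ₗ π
      counit_comp := LinearMap.ext fun a => (hz.map_ε _).trans (hπ.map_ε a)
      map_comp_comul := LinearMap.ext fun a => by
        change map (z ∘ₗ π) (z ∘ₗ π) (SA.Δ a) = SA.Δ (z (π a))
        rw [← hz.map_Δ, ← hπ.map_Δ, TensorProduct.map_map] }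
  exact (LinearMap.congr_fun
    ((CoalgHom.lTensor A zπ).comp (Coalgebra.comulCoalgHom k A)).map_comp_comul u).symm

lemma pbFst_pairWithZero (hπ : DivBialgHom k SA SB π) (hz : DivBialgHom k SB SA z) (u : A) :
    pbFst k SA π (pairWithZero SA π z u) = π u := by
  have h : ∀ w : A ⊗[k] A, pbFst k SA π (LinearMap.lTensor A (z ∘ₗ π) w)
      = π (TensorProduct.rid k A (SA.ε.lTensor A w)) := by
    intro w
    induction w using TensorProduct.induction_on with
    | zero => simp
    | tmul a c => simp [pbFst, hz.map_ε, hπ.map_ε]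
    | add w₁ w₂ h₁ h₂ => simp only [map_add, h₁, h₂]
  rw [pairWithZero, LinearMap.comp_apply, h, SA.counit_right]

lemma pbSnd_pairWithZero (hsec : π ∘ₗ z = LinearMap.id) (u : A) :
    pbSnd k SA π (pairWithZero SA π z u) = π u := by
  have h : ∀ w : A ⊗[k] A, pbSnd k SA π (LinearMap.lTensor A (z ∘ₗ π) w)
      = π (TensorProduct.lid k A (SA.ε.rTensor A w)) := by
    intro w
    induction w using TensorProduct.induction_on with
    | zero => simp
    | tmul a c => simp [pbSnd, ← LinearMap.comp_apply π z, hsec]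
    | add w₁ w₂ h₁ h₂ => simp only [map_add, h₁, h₂]
  rw [pairWithZero, LinearMap.comp_apply, h, SA.counit_left]

lemma pairWithZero_of_mem_Fsub (hz : DivBialgHom k SB SA z) {x : A}
    (hx : x ∈ Fsub k SA SB.one π) : pairWithZero SA π z x = x ⊗ₜ SA.one := by
  set ε1 := LinearMap.toSpanSingleton k A SA.one ∘ₗ SA.ε
  have hε1 : ∀ w : A ⊗[k] A,
      LinearMap.lTensor A ε1 w = TensorProduct.rid k A (SA.ε.lTensor A w) ⊗ₜ SA.one := by
    intro w
    induction w using TensorProduct.induction_on with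
    | zero => simp
    | tmul a c => simp [ε1, TensorProduct.smul_tmul']
    | add w₁ w₂ h₁ h₂ => simp only [map_add, h₁, h₂, TensorProduct.add_tmul]
  suffices Fsub k SA SB.one π
      ≤ LinearMap.eqLocus (pairWithZero SA π z) ((TensorProduct.mk k A A).flip SA.one) from this hx
  refine sSup_le ?_
  rintro D ⟨hD, hπD⟩ y hy
  obtain ⟨w, hw⟩ := hD y hy
  have hzπ : (z ∘ₗ π) ∘ₗ D.subtype = ε1 ∘ₗ D.subtype := by
    ext d
    simp [ε1, hπD d d.2, hz.map_one]
  show LinearMap.lTensor A (z ∘ₗ π) (SA.Δ y) = y ⊗ₜ SA.one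
  rw [← hw, ← LinearMap.comp_apply, LinearMap.lTensor_comp_map, hzπ,
    ← LinearMap.lTensor_comp_map, LinearMap.comp_apply, hw, hε1, SA.counit_right]

end PairWithZero

section Pullback

variable {k A B : Type*} [Field k] [AddCommGroup A] [Module k A] [AddCommGroup B] [Module k B]
  {SA : DivBialg k A} {SB : DivBialg k B} {π : A →ₗ[k] B} {z : B →ₗ[k] A}

variable (SA π) in
def pbSet : Set (Submodule k (A ⊗[k] A)) :=
  {C | IsSubcoalg k (tcomul k SA) C ∧ C ≤ LinearMap.eqLocus (pbFst k SA π) (pbSnd k SA π)}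

lemma le_pbSub {C : Submodule k (A ⊗[k] A)} (hC : C ∈ pbSet SA π) : C ≤ pbSub k SA π :=
  le_sSup hC

variable (SA π) in
lemma pbSub_mem_pbSet : pbSub k SA π ∈ pbSet SA π :=
  ⟨isSubcoalg_sSup fun _ hC => hC.1, sSup_le fun _ hC => hC.2⟩

lemma comm_mem_pbSub {t : A ⊗[k] A} (ht : t ∈ pbSub k SA π) :
    TensorProduct.comm k A A t ∈ pbSub k SA π := by
  refine le_pbSub ⟨(pbSub_mem_pbSet SA π).1.map _ (tcomul_comm SA), ?_⟩
    (Submodule.mem_map_of_mem ht)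
  rintro _ ⟨s, hs, rfl⟩
  rw [LinearMap.mem_eqLocus, LinearEquiv.coe_coe, pbFst_comm, pbSnd_comm,
    LinearMap.mem_eqLocus.1 ((pbSub_mem_pbSet SA π).2 hs)]

lemma map₂_mul_mem_pbSub (hπ : DivBialgHom k SA SB π) {s t : A ⊗[k] A}
    (hs : s ∈ pbSub k SA π) (ht : t ∈ pbSub k SA π) :
    map₂ SA.mul SA.mul s t ∈ pbSub k SA π := by
  have hP := pbSub_mem_pbSet SA π
  refine le_pbSub ⟨hP.1.map₂ hP.1 _ (tcomul_map₂_mul SA), ?_⟩ (apply_mem_map₂ _ hs ht)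
  refine map₂_le.2 fun s hs t ht => ?_
  rw [LinearMap.mem_eqLocus, pbFst_map₂_mul hπ, pbSnd_map₂_mul hπ,
    LinearMap.mem_eqLocus.1 (hP.2 hs), LinearMap.mem_eqLocus.1 (hP.2 ht)]

lemma pairWithZero_mem_pbSub (hπ : DivBialgHom k SA SB π) (hz : DivBialgHom k SB SA z)
    (hsec : π ∘ₗ z = LinearMap.id) (u : A) : pairWithZero SA π z u ∈ pbSub k SA π := by
  refine le_pbSub ⟨?_, ?_⟩ (LinearMap.mem_range_self _ u)
  · rw [← Submodule.map_top]
    exact (isSubcoalg_top SA.Δ).map _ (tcomul_pairWithZero hπ hz)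
  · rintro _ ⟨v, rfl⟩
    exact (pbFst_pairWithZero hπ hz v).trans (pbSnd_pairWithZero hsec v).symm

end Pullback

section UnitLaws

variable {k A : Type*} [Field k] [AddCommGroup A] [Module k A] (SA : DivBialg k A) (x y : A)

lemma map₂_mul_tmul_one_one_tmul :
    map₂ SA.mul SA.mul (x ⊗ₜ SA.one) (SA.one ⊗ₜ y) = x ⊗ₜ y := by
  simp only [map₂_apply_tmul, TensorProduct.map_tmul, SA.mul_one, SA.one_mul]

lemma map₂_mul_tmul_one_map₂_mul_one_tmul (t : A ⊗[k] A) :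
    map₂ SA.mul SA.mul (x ⊗ₜ SA.one) (map₂ SA.mul SA.mul (SA.one ⊗ₜ y) t)
      = map₂ SA.mul SA.mul (x ⊗ₜ y) t := by
  induction t using TensorProduct.induction_on with
  | zero => simp
  | tmul a c => simp only [map₂_apply_tmul, TensorProduct.map_tmul, SA.one_mul]
  | add t₁ t₂ h₁ h₂ => simp only [map_add, h₁, h₂]

lemma map₂_mul_map₂_mul_tmul_one_one_tmul (t : A ⊗[k] A) :
    map₂ SA.mul SA.mul (map₂ SA.mul SA.mul t (x ⊗ₜ SA.one)) (SA.one ⊗ₜ y)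
      = map₂ SA.mul SA.mul t (x ⊗ₜ y) := by
  induction t using TensorProduct.induction_on with
  | zero => simp
  | tmul a c => simp only [map₂_apply_tmul, TensorProduct.map_tmul, SA.mul_one]
  | add t₁ t₂ h₁ h₂ => simp only [map_add, LinearMap.add_apply, h₁, h₂]

lemma map₂_mul_map₂_mul_tmul_one_assoc (t : A ⊗[k] A) :
    map₂ SA.mul SA.mul (map₂ SA.mul SA.mul (x ⊗ₜ SA.one) t) (SA.one ⊗ₜ y)
      = map₂ SA.mul SA.mul (x ⊗ₜ SA.one) (map₂ SA.mul SA.mul t (SA.one ⊗ₜ y)) := by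
  induction t using TensorProduct.induction_on with
  | zero => simp
  | tmul a c => simp only [map₂_apply_tmul, TensorProduct.map_tmul, SA.one_mul, SA.mul_one]
  | add t₁ t₂ h₁ h₂ => simp only [map_add, LinearMap.add_apply, h₁, h₂]

end UnitLaws

namespace BoxPlusData

variable {k A B : Type*} [Field k] [AddCommGroup A] [Module k A] [AddCommGroup B] [Module k B]
  {SA : DivBialg k A} {SB : DivBialg k B} {π : A →ₗ[k] B} {z : B →ₗ[k] A}
  (P : BoxPlusData k SA SB π z)

def EvalsTo (t : A ⊗[k] A) (a : A) : Prop :=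
  ∃ ht : t ∈ pbSub k SA π, P.bp ⟨t, ht⟩ = a

variable {P}

lemma EvalsTo.unique {t : A ⊗[k] A} {a a' : A} (h : P.EvalsTo t a) (h' : P.EvalsTo t a') :
    a = a' := by
  obtain ⟨_, rfl⟩ := h
  obtain ⟨_, rfl⟩ := h'
  rfl

lemma EvalsTo.mul (hπ : DivBialgHom k SA SB π) {t t' : A ⊗[k] A} {a a' : A}
    (h : P.EvalsTo t a) (h' : P.EvalsTo t' a') :
    P.EvalsTo (map₂ SA.mul SA.mul t t') (SA.mul a a') := by
  obtain ⟨ht, rfl⟩ := h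
  obtain ⟨ht', rfl⟩ := h'
  exact ⟨map₂_mul_mem_pbSub hπ ht ht', P.bp_mul ⟨t, ht⟩ ⟨t', ht'⟩ _⟩

lemma EvalsTo.comm {t : A ⊗[k] A} {a : A} (h : P.EvalsTo t a) :
    P.EvalsTo (TensorProduct.comm k A A t) a := by
  obtain ⟨ht, rfl⟩ := h
  exact ⟨comm_mem_pbSub ht, P.bp_flip ⟨t, ht⟩ _⟩

variable (P)

lemma evalsTo_pairWithZero (hπ : DivBialgHom k SA SB π) (hz : DivBialgHom k SB SA z)
    (hsec : π ∘ₗ z = LinearMap.id) (u : A) : P.EvalsTo (pairWithZero SA π z u) u :=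
  ⟨pairWithZero_mem_pbSub hπ hz hsec u, P.bp_unit_right u _⟩

lemma evalsTo_tmul_one (hπ : DivBialgHom k SA SB π) (hz : DivBialgHom k SB SA z)
    (hsec : π ∘ₗ z = LinearMap.id) {x : A} (hx : x ∈ Fsub k SA SB.one π) :
    P.EvalsTo (x ⊗ₜ SA.one) x :=
  pairWithZero_of_mem_Fsub hz hx ▸ P.evalsTo_pairWithZero hπ hz hsec x

lemma evalsTo_one_tmul (hπ : DivBialgHom k SA SB π) (hz : DivBialgHom k SB SA z)
    (hsec : π ∘ₗ z = LinearMap.id) {x : A} (hx : x ∈ Fsub k SA SB.one π) :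
    P.EvalsTo (SA.one ⊗ₜ x) x :=
  (P.evalsTo_tmul_one hπ hz hsec hx).comm

end BoxPlusData

end FormalLoops

open FormalLoops in
theorem fsub_mixed_associativity_general
    (k : Type*) [Field k]
    {A B : Type*} [AddCommGroup A] [Module k A] [AddCommGroup B] [Module k B]
    (SA : DivBialg k A) (SB : DivBialg k B)
    (π : A →ₗ[k] B) (z : B →ₗ[k] A)
    (hπ : DivBialgHom k SA SB π) (hz : DivBialgHom k SB SA z)
    (hsec : π ∘ₗ z = LinearMap.id)
    (P : BoxPlusData k SA SB π z)
    (F : Submodule k A) (hF : F = Fsub k SA SB.one π) :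
    ∀ x ∈ F, ∀ x' ∈ F, ∀ b : B,
      SA.mul x (SA.mul x' (z b)) = SA.mul (SA.mul x x') (z b) ∧
      SA.mul (SA.mul (z b) x) x' = SA.mul (z b) (SA.mul x x') ∧
      SA.mul (SA.mul x (z b)) x' = SA.mul x (SA.mul (z b) x') := by
  subst hF
  intro x hx x' hx' b
  have hx1 := P.evalsTo_tmul_one hπ hz hsec hx
  have h1x' := P.evalsTo_one_tmul hπ hz hsec hx'
  have hb := P.evalsTo_pairWithZero hπ hz hsec (z b)
  have hxx' : P.EvalsTo (x ⊗ₜ x') (SA.mul x x') := by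
    simpa only [map₂_mul_tmul_one_one_tmul] using hx1.mul hπ h1x'
  refine ⟨?_, ?_, ?_⟩
  · refine (hx1.mul hπ (h1x'.mul hπ hb)).unique ?_
    rw [map₂_mul_tmul_one_map₂_mul_one_tmul]
    exact hxx'.mul hπ hb
  · refine ((hb.mul hπ hx1).mul hπ h1x').unique ?_
    rw [map₂_mul_map₂_mul_tmul_one_one_tmul]
    exact hb.mul hπ hxx'
  · refine ((hx1.mul hπ hb).mul hπ h1x').unique ?_
    rw [map₂_mul_map₂_mul_tmul_one_assoc]
    exact hx1.mul hπ (hb.mul hπ h1x')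

open FormalLoops in
/-- for `x, x' ∈ F(A)` and `b ∈ B` acting through `z`:
`x·(x'·b) = (x·x')·b`, `(b·x)·x' = b·(x·x')` and `(x·b)·x' = x·(b·x')`. -/
theorem fsub_mixed_associativity
    (k : Type*) [Field k] [CharZero k]
    {A B : Type*} [AddCommGroup A] [Module k A] [AddCommGroup B] [Module k B]
    (SA : DivBialg k A) (SB : DivBialg k B)
    (π : A →ₗ[k] B) (z : B →ₗ[k] A)
    (hπ : DivBialgHom k SA SB π) (hz : DivBialgHom k SB SA z)
    (hsec : π ∘ₗ z = LinearMap.id)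
    (P : BoxPlusData k SA SB π z)
    (F : Submodule k A) (hF : F = Fsub k SA SB.one π) :
    ∀ x ∈ F, ∀ x' ∈ F, ∀ b : B,
      SA.mul x (SA.mul x' (z b)) = SA.mul (SA.mul x x') (z b) ∧
      SA.mul (SA.mul (z b) x) x' = SA.mul (z b) (SA.mul x x') ∧
      SA.mul (SA.mul x (z b)) x' = SA.mul x (SA.mul (z b) x') :=
  fsub_mixed_associativity_general k SA SB π z hπ hz hsec P F hF
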